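/- Let n ≥ 2. The open unit ball 𝔹ⁿ = {(z₁,…,zₙ) ∈ ℂⁿ : |z₁|² + ⋯ + |zₙ|² < 1} and the open unit polydisk 𝔻ⁿ = {(z₁,…,zₙ) ∈ ℂⁿ : |zᵢ| < 1 for all i} are not biholomorphic: there exists no bijection f : 𝔹ⁿ → 𝔻ⁿ such that both f and f⁻¹ are holomorphic. (Theorem of Poincaré, cited as item (e) in Section 1.2.) -/

import Mathlib

/-!
After composing with a coordinatewise Möbius map of the polydisk we may assume that the
biholomorphism `f` fixes the origin. The polydisk is the unit ball of `ℂⁿ` with the sup norm, so the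
Schwarz lemma for maps between unit balls of normed spaces, applied to `f` and to its inverse `g`,
bounds `‖Df(0)‖` and `‖Dg(0)‖` by one. Being mutually inverse, `Dg(0)` is then a linear isometry
from `(ℂⁿ, ‖·‖_∞)` into Euclidean `ℂⁿ`. For `n ≥ 2` this is impossible: `e₁`, `e₂` and `e₁ ± e₂`
all have sup norm one, which violates the parallelogram law.
-/

open Metric Set
open scoped ComplexConjugate

section Biholomorphism

variable {E F G : Type*} [NormedAddCommGroup E] [NormedSpace ℂ E] [NormedAddCommGroup F]
  [NormedSpace ℂ F] [NormedAddCommGroup G] [NormedSpace ℂ G]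

structure IsBiholomorphism (f : E → F) (g : F → E) (U : Set E) (V : Set F) : Prop where
  differentiableOn : DifferentiableOn ℂ f U
  differentiableOn_inv : DifferentiableOn ℂ g V
  mapsTo : MapsTo f U V
  mapsTo_inv : MapsTo g V U
  invOn : InvOn g f U V

namespace IsBiholomorphism

variable {f : E → F} {g : F → E} {f' : F → G} {g' : G → F} {U : Set E} {V : Set F} {W : Set G}

theorem comp (h' : IsBiholomorphism f' g' V W) (h : IsBiholomorphism f g U V) :
    IsBiholomorphism (f' ∘ f) (g ∘ g') U W where
  differentiableOn := h'.differentiableOn.comp h.differentiableOn h.mapsTo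
  differentiableOn_inv := h.differentiableOn_inv.comp h'.differentiableOn_inv h'.mapsTo_inv
  mapsTo := h'.mapsTo.comp h.mapsTo
  mapsTo_inv := h.mapsTo_inv.comp h'.mapsTo_inv
  invOn := h.invOn.comp h'.invOn h.mapsTo h'.mapsTo_inv

theorem fderiv_comp_fderiv_inv (h : IsBiholomorphism f g U V) (hU : IsOpen U) (hV : IsOpen V)
    {y : F} (hy : y ∈ V) : (fderiv ℂ f (g y)).comp (fderiv ℂ g y) = ContinuousLinearMap.id ℂ F := by
  rw [← fderiv_comp y (h.differentiableOn.differentiableAt (hU.mem_nhds (h.mapsTo_inv hy)))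
    (h.differentiableOn_inv.differentiableAt (hV.mem_nhds hy)), ← fderiv_id]
  exact Filter.EventuallyEq.fderiv_eq (Filter.eventually_of_mem (hV.mem_nhds hy) h.invOn.2)

theorem isometry_fderiv_inv (h : IsBiholomorphism f g (ball 0 1) (ball 0 1)) (h₀ : f 0 = 0) :
    Isometry (fderiv ℂ g 0) := by
  have hg₀ : g 0 = 0 := by simpa [h₀] using h.invOn.1 (mem_ball_self one_pos)
  have hf : ‖fderiv ℂ f 0‖ ≤ 1 := Complex.norm_fderiv_le_one_of_mapsTo_ball h.differentiableOn
    (h₀ ▸ h.mapsTo.mono_right ball_subset_closedBall) one_pos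
  have hg : ‖fderiv ℂ g 0‖ ≤ 1 := Complex.norm_fderiv_le_one_of_mapsTo_ball h.differentiableOn_inv
    (hg₀ ▸ h.mapsTo_inv.mono_right ball_subset_closedBall) one_pos
  have hfg := h.fderiv_comp_fderiv_inv isOpen_ball isOpen_ball (mem_ball_self one_pos)
  rw [hg₀] at hfg
  refine (AddMonoidHomClass.isometry_iff_norm _).2 fun w ↦ le_antisymm ?_ ?_
  · simpa using (fderiv ℂ g 0).le_of_opNorm_le hg w
  · calc ‖w‖ = ‖fderiv ℂ f 0 (fderiv ℂ g 0 w)‖ := by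
          rw [← ContinuousLinearMap.comp_apply, hfg, ContinuousLinearMap.id_apply]
      _ ≤ ‖fderiv ℂ g 0 w‖ := by simpa using (fderiv ℂ f 0).le_of_opNorm_le hf _

end IsBiholomorphism

theorem ContinuousLinearEquiv.isBiholomorphism_preimage (e : E ≃L[ℂ] F) (V : Set F) :
    IsBiholomorphism e e.symm (e ⁻¹' V) V where
  differentiableOn := e.differentiable.differentiableOn
  differentiableOn_inv := e.symm.differentiable.differentiableOn
  mapsTo := fun _ hx ↦ hx
  mapsTo_inv := fun y hy ↦ by simpa using hy
  invOn := ⟨fun x _ ↦ e.symm_apply_apply x, fun y _ ↦ e.apply_symm_apply y⟩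

end Biholomorphism

section Mobius

noncomputable def mobius (a z : ℂ) : ℂ := (z - a) / (1 - conj a * z)

@[simp]
theorem mobius_self (a : ℂ) : mobius a a = 0 := by simp [mobius]

theorem one_sub_conj_mul_ne_zero {a z : ℂ} (ha : ‖a‖ < 1) (hz : ‖z‖ < 1) : 1 - conj a * z ≠ 0 := by
  refine sub_ne_zero.2 fun h ↦ ?_
  have : ‖conj a * z‖ < 1 := by
    rw [norm_mul, Complex.norm_conj]
    exact mul_lt_one_of_nonneg_of_lt_one_left (norm_nonneg _) ha hz.le
  simp [← h] at this

theorem norm_one_sub_conj_mul_sq_sub_norm_sub_sq (a z : ℂ) :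
    ‖1 - conj a * z‖ ^ 2 - ‖z - a‖ ^ 2 = (1 - ‖a‖ ^ 2) * (1 - ‖z‖ ^ 2) := by
  simp only [← Complex.normSq_eq_norm_sq, Complex.normSq_apply, Complex.sub_re, Complex.sub_im,
    Complex.mul_re, Complex.mul_im, Complex.conj_re, Complex.conj_im, Complex.one_re,
    Complex.one_im]
  ring

theorem norm_mobius_lt_one {a z : ℂ} (ha : ‖a‖ < 1) (hz : ‖z‖ < 1) : ‖mobius a z‖ < 1 := by
  have key := norm_one_sub_conj_mul_sq_sub_norm_sub_sq a z
  have hpos : 0 < (1 - ‖a‖ ^ 2) * (1 - ‖z‖ ^ 2) := by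
    apply mul_pos <;> nlinarith [norm_nonneg a, norm_nonneg z]
  rw [mobius, norm_div, div_lt_one (norm_pos_iff.2 (one_sub_conj_mul_ne_zero ha hz))]
  exact lt_of_pow_lt_pow_left₀ 2 (norm_nonneg _) (by linarith)

theorem mobius_neg_mobius {a z : ℂ} (ha : ‖a‖ < 1) (hz : ‖z‖ < 1) :
    mobius (-a) (mobius a z) = z := by
  have hz' := one_sub_conj_mul_ne_zero ha hz
  have ha' : 1 - conj a * a ≠ 0 := one_sub_conj_mul_ne_zero ha ha
  have hden : (1 - conj (-a) * mobius a z) * (1 - conj a * z) = 1 - conj a * a := by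
    rw [mobius, map_neg]; field_simp; ring
  rw [mobius, div_eq_iff (left_ne_zero_of_mul (hden ▸ ha')), ← mul_left_inj' hz', mul_assoc, hden,
    mobius]
  have hz'' : 1 - z * conj a ≠ 0 := by rwa [mul_comm]
  field_simp
  ring

theorem differentiableOn_mobius {a : ℂ} (ha : ‖a‖ < 1) :
    DifferentiableOn ℂ (mobius a) (ball 0 1) := fun z hz ↦ by
  have hz' : ‖z‖ < 1 := mem_ball_zero_iff.1 hz
  unfold mobius
  fun_prop (disch := exact one_sub_conj_mul_ne_zero ha hz')

noncomputable def piMobius {ι : Type*} (a z : ι → ℂ) : ι → ℂ := fun i ↦ mobius (a i) (z i)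

theorem isBiholomorphism_piMobius {ι : Type*} [Fintype ι] {a : ι → ℂ} (ha : a ∈ ball 0 1) :
    IsBiholomorphism (piMobius a) (piMobius (-a)) (ball 0 1) (ball 0 1) := by
  have hball {z : ι → ℂ} : z ∈ ball 0 1 ↔ ∀ i, ‖z i‖ < 1 := by
    rw [mem_ball_zero_iff, pi_norm_lt_iff one_pos]
  have ha' : ∀ i, ‖a i‖ < 1 := hball.1 ha
  have hna' : ∀ i, ‖(-a) i‖ < 1 := by simpa using ha'
  have hmaps {b : ι → ℂ} (hb : ∀ i, ‖b i‖ < 1) : MapsTo (piMobius b) (ball 0 1) (ball 0 1) :=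
    fun z hz ↦ hball.2 fun i ↦ norm_mobius_lt_one (hb i) (hball.1 hz i)
  have hdiff {b : ι → ℂ} (hb : ∀ i, ‖b i‖ < 1) : DifferentiableOn ℂ (piMobius b) (ball 0 1) :=
    differentiableOn_pi.2 fun i ↦ (differentiableOn_mobius (hb i)).comp
      (ContinuousLinearMap.proj (R := ℂ) (φ := fun _ : ι ↦ ℂ) i).differentiableOn
      fun z hz ↦ mem_ball_zero_iff.2 (hball.1 hz i)
  refine ⟨hdiff ha', hdiff hna', hmaps ha', hmaps hna', fun z hz ↦ ?_, fun z hz ↦ ?_⟩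
  · funext i
    exact mobius_neg_mobius (ha' i) (hball.1 hz i)
  · funext i
    simpa [piMobius] using mobius_neg_mobius (hna' i) (hball.1 hz i)

end Mobius

theorem Pi.norm_single_add_single {ι F : Type*} [Fintype ι] [DecidableEq ι] [NormedAddCommGroup F]
    {i j : ι} (hij : i ≠ j) (a b : F) :
    ‖(Pi.single i a : ι → F) + Pi.single j b‖ = max ‖a‖ ‖b‖ := by
  refine le_antisymm ((pi_norm_le_iff_of_nonneg (by positivity)).2 fun k ↦ ?_) ?_
  · by_cases hki : k = i
    · subst hki; simp [hij]
    · by_cases hkj : k = j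
      · subst hkj; simp [hki]
      · simp [hki, hkj]
  · refine max_le ?_ ?_
    · have := norm_le_pi_norm ((Pi.single i a : ι → F) + Pi.single j b) i
      rwa [Pi.add_apply, Pi.single_eq_same, Pi.single_eq_of_ne hij, add_zero] at this
    · have := norm_le_pi_norm ((Pi.single i a : ι → F) + Pi.single j b) j
      rwa [Pi.add_apply, Pi.single_eq_same, Pi.single_eq_of_ne hij.symm, zero_add] at this

theorem not_isometry_pi_to_innerProductSpace {𝕜 E ι F 𝓕 : Type*} [RCLike 𝕜]
    [NormedAddCommGroup E] [InnerProductSpace 𝕜 E] [Fintype ι] [Nontrivial ι]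
    [NormedAddCommGroup F] [Nontrivial F] [FunLike 𝓕 (ι → F) E] [AddMonoidHomClass 𝓕 (ι → F) E]
    (L : 𝓕) : ¬ Isometry L := by
  classical
  intro hL
  obtain ⟨i, j, hij⟩ := exists_pair_ne ι
  obtain ⟨c, hc⟩ := exists_ne (0 : F)
  have hnorm (x : ι → F) : ‖L x‖ = ‖x‖ := (AddMonoidHomClass.isometry_iff_norm L).1 hL x
  have := parallelogram_law_with_norm 𝕜 (L (Pi.single i c)) (L (Pi.single j c))
  rw [← map_add, ← map_sub, hnorm, hnorm, hnorm, hnorm, sub_eq_add_neg, ← Pi.single_neg,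
    Pi.norm_single_add_single hij, Pi.norm_single_add_single hij, Pi.norm_single, Pi.norm_single,
    norm_neg, max_self] at this
  exact hc (norm_eq_zero.1 (by nlinarith [norm_nonneg c]))

/-- **Poincaré's theorem.** For `n ≥ 2`, the open unit ball
`𝔹ⁿ = {z ∈ ℂⁿ : |z₁|² + ⋯ + |zₙ|² < 1}` and the open unit polydisk
`𝔻ⁿ = {z ∈ ℂⁿ : |zᵢ| < 1 for all i}` are not biholomorphic: there is no
holomorphic bijection `f : 𝔹ⁿ → 𝔻ⁿ` with holomorphic inverse. -/
theorem ball_not_biholomorphic_to_polydisk (n : ℕ) (hn : 2 ≤ n) :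
    ¬ ∃ f g : EuclideanSpace ℂ (Fin n) → EuclideanSpace ℂ (Fin n),
        DifferentiableOn ℂ f (Metric.ball (0 : EuclideanSpace ℂ (Fin n)) 1) ∧
        DifferentiableOn ℂ g {z : EuclideanSpace ℂ (Fin n) | ∀ i, ‖z i‖ < 1} ∧
        Set.MapsTo f (Metric.ball (0 : EuclideanSpace ℂ (Fin n)) 1)
          {z : EuclideanSpace ℂ (Fin n) | ∀ i, ‖z i‖ < 1} ∧
        Set.MapsTo g {z : EuclideanSpace ℂ (Fin n) | ∀ i, ‖z i‖ < 1}
          (Metric.ball (0 : EuclideanSpace ℂ (Fin n)) 1) ∧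
        (∀ z ∈ Metric.ball (0 : EuclideanSpace ℂ (Fin n)) 1, g (f z) = z) ∧
        (∀ w ∈ {z : EuclideanSpace ℂ (Fin n) | ∀ i, ‖z i‖ < 1}, f (g w) = w) := by
  rintro ⟨f, g, hf, hg, hmf, hmg, hgf, hfg⟩
  let e := PiLp.continuousLinearEquiv 2 ℂ (fun _ : Fin n ↦ ℂ)
  have hpolydisk : {z : EuclideanSpace ℂ (Fin n) | ∀ i, ‖z i‖ < 1} = e ⁻¹' ball 0 1 := by
    ext z
    simp [e, pi_norm_lt_iff one_pos]
  rw [hpolydisk] at hg hmf hmg hfg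
  have h := (e.isBiholomorphism_preimage _).comp ⟨hf, hg, hmf, hmg, hgf, hfg⟩
  have ha : e (f 0) ∈ ball 0 1 := h.mapsTo (mem_ball_self one_pos)
  have h₀ := (isBiholomorphism_piMobius ha).comp h
  have : Nontrivial (Fin n) := Fin.nontrivial_iff_two_le.2 hn
  exact not_isometry_pi_to_innerProductSpace (𝕜 := ℂ) _
    (h₀.isometry_fderiv_inv (funext fun i ↦ mobius_self _))
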